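/- Let κ ∈ ℝ, n > 0 a real number, and c ∈ ℂ. Define F(z) := c · Γ(1-κ, 4πn y) · e^{-2πi n z} for z = x+iy ∈ ℍ, where Γ(s,w) is the upper incomplete gamma function. Then ξ_κ(F)(z) = -(4πn)^{1-κ} · conj(c) · e^{2πi n z}, where ξ_κ F := 2i y^κ · conjugate(∂F/∂z̄). -/

import Mathlib

open Real Complex Set

noncomputable section

/-- The upper incomplete gamma function `Γ(s, w) = ∫_w^∞ e^{-t} t^{s-1} dt`. -/
def upperIncompleteGamma (s w : ℝ) : ℝ :=
  ∫ t in Ioi w, Real.exp (-t) * t ^ (s - 1)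

/-- Partial derivative in the real (`x`) direction. -/
def pdx (F : ℂ → ℂ) (z : ℂ) : ℂ := fderiv ℝ F z 1

/-- Partial derivative in the imaginary (`y`) direction. -/
def pdy (F : ℂ → ℂ) (z : ℂ) : ℂ := fderiv ℝ F z Complex.I

/-- Wirtinger derivative `∂/∂z̄`. -/
def wdzbar (F : ℂ → ℂ) (z : ℂ) : ℂ := (pdx F z + Complex.I * pdy F z) / 2

/-- The operator `ξ_κ F := 2i y^κ ⋅ conj(∂F/∂z̄)`. -/
def xiOp (κ : ℝ) (F : ℂ → ℂ) (z : ℂ) : ℂ :=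
  2 * Complex.I * ((z.im ^ κ : ℝ) : ℂ) * (starRingEnd ℂ) (wdzbar F z)

end


/-!
Since `e^{-2πinz}` is holomorphic, `∂/∂z̄` only sees the factor `Γ(1-κ, 4πny)`, a function of
`y` alone, on which `∂/∂z̄ = (i/2) ∂/∂y`; by the fundamental theorem of calculus
`∂_w Γ(s, w) = -e^{-w} w^{s-1}`. After conjugation, `e^{-4πny}` cancels against
`conj e^{-2πinz} = e^{2πinz} e^{4πny}`, and `y^κ (4πny)^{-κ} · 4πn = (4πn)^{1-κ}`.
-/

open MeasureTheory Topology

lemma continuousOn_exp_neg_mul_rpow (s : ℝ) :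
    ContinuousOn (fun t : ℝ => Real.exp (-t) * t ^ (s - 1)) (Ioi 0) :=
  continuousOn_id.neg.rexp.mul (continuousOn_id.rpow_const fun _ ht => Or.inl (ne_of_gt ht))

lemma integrableOn_exp_neg_mul_rpow_Ioi (s : ℝ) {a : ℝ} (ha : 0 < a) :
    IntegrableOn (fun t : ℝ => Real.exp (-t) * t ^ (s - 1)) (Ioi a) :=
  integrable_of_isBigO_exp_neg one_half_pos
    ((continuousOn_exp_neg_mul_rpow s).mono fun _ ht => ha.trans_le ht)
    (Real.Gamma_integrand_isLittleO _).isBigO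

lemma hasDerivAt_upperIncompleteGamma (s : ℝ) {w : ℝ} (hw : 0 < w) :
    HasDerivAt (upperIncompleteGamma s) (-(Real.exp (-w) * w ^ (s - 1))) w := by
  set f : ℝ → ℝ := fun t => Real.exp (-t) * t ^ (s - 1)
  have hcont : ContinuousOn f (Ioi 0) := continuousOn_exp_neg_mul_rpow s
  have hw2 : 0 < w / 2 := half_pos hw
  have hnear : upperIncompleteGamma s =ᶠ[𝓝 w]
      fun u => upperIncompleteGamma s (w / 2) - ∫ t in (w / 2)..u, f t := by
    filter_upwards [Ioi_mem_nhds (half_lt_self hw)] with u hu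
    rw [upperIncompleteGamma, upperIncompleteGamma, ← intervalIntegral.integral_Ioi_sub_Ioi
      (integrableOn_exp_neg_mul_rpow_Ioi s hw2) hu.le, sub_sub_cancel]
  have hFTC : HasDerivAt (fun u => ∫ t in (w / 2)..u, f t) (f w) w :=
    intervalIntegral.integral_hasDerivAt_right
      ((hcont.mono fun _ ht => hw2.trans_le ht.1).intervalIntegrable_of_Icc (half_le_self hw.le))
      (hcont.stronglyMeasurableAtFilter isOpen_Ioi w hw)
      (hcont.continuousAt (Ioi_mem_nhds hw))
  exact (hFTC.const_sub _).congr_of_eventuallyEq hnear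

section Wirtinger

variable {z : ℂ}

lemma wdzbar_eq_zero_of_differentiableAt {h : ℂ → ℂ} (hh : DifferentiableAt ℂ h z) :
    wdzbar h z = 0 := by
  have hR : fderiv ℝ h z = (fderiv ℂ h z).restrictScalars ℝ :=
    hh.hasFDerivAt.restrictScalars ℝ |>.fderiv
  have hI : fderiv ℂ h z Complex.I = Complex.I * fderiv ℂ h z 1 := by
    rw [← smul_eq_mul, ← (fderiv ℂ h z).map_smul, smul_eq_mul, mul_one]
  simp only [wdzbar, pdx, pdy, hR, ContinuousLinearMap.coe_restrictScalars', hI]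
  linear_combination (fderiv ℂ h z 1 / 2) * Complex.I_sq

lemma wdzbar_mul {f g : ℂ → ℂ} (hf : DifferentiableAt ℝ f z) (hg : DifferentiableAt ℝ g z) :
    wdzbar (fun w => f w * g w) z = wdzbar f z * g z + f z * wdzbar g z := by
  simp only [wdzbar, pdx, pdy, fderiv_fun_mul hf hg, add_apply, smul_apply, smul_eq_mul]
  ring

lemma hasFDerivAt_ofReal_comp_im {φ : ℝ → ℝ} {φ' : ℝ} (hφ : HasDerivAt φ φ' z.im) :
    HasFDerivAt (fun w : ℂ => ((φ w.im : ℝ) : ℂ))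
      (Complex.ofRealCLM.comp (φ' • Complex.imCLM)) z :=
  Complex.ofRealCLM.hasFDerivAt.comp z (hφ.comp_hasFDerivAt z Complex.imCLM.hasFDerivAt)

lemma wdzbar_ofReal_comp_im {φ : ℝ → ℝ} {φ' : ℝ} (hφ : HasDerivAt φ φ' z.im) :
    wdzbar (fun w => ((φ w.im : ℝ) : ℂ)) z = Complex.I * φ' / 2 := by
  simp [wdzbar, pdx, pdy, (hasFDerivAt_ofReal_comp_im hφ).fderiv]

end Wirtinger

lemma conj_cexp_neg_two_pi_I_mul_mul_exp (n : ℝ) (z : ℂ) :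
    (starRingEnd ℂ) (Complex.exp (-2 * π * Complex.I * n * z))
      * ((Real.exp (-(4 * π * n * z.im)) : ℝ) : ℂ) = Complex.exp (2 * π * Complex.I * n * z) := by
  rw [← Complex.exp_conj, Complex.ofReal_exp, ← Complex.exp_add]
  congr 1
  have hconj : (starRingEnd ℂ) z = z - 2 * z.im * Complex.I := by
    have := Complex.sub_conj z
    push_cast at this
    linear_combination -this
  simp only [map_mul, map_neg, map_ofNat, Complex.conj_ofReal, Complex.conj_I, hconj]
  push_cast
  linear_combination (-4 * (π : ℂ) * n * z.im) * Complex.I_sq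

lemma rpow_mul_mul_rpow_neg {a y : ℝ} (ha : 0 < a) (hy : 0 < y) (κ : ℝ) :
    y ^ κ * (a * y) ^ (-κ) * a = a ^ (1 - κ) := by
  rw [Real.mul_rpow ha.le hy.le, Real.rpow_neg hy.le, Real.rpow_sub ha, Real.rpow_one,
    Real.rpow_neg ha.le]
  field_simp

/-- For `F(z) = c Γ(1-κ, 4πny) e^{-2πinz}`, one has
`ξ_κ(F)(z) = -(4πn)^{1-κ} conj(c) e^{2πinz}` on the upper half-plane. -/
theorem xi_of_incomplete_gamma_term (κ : ℝ) (n : ℝ) (hn : 0 < n) (c : ℂ) :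
    ∀ z : ℂ, 0 < z.im →
      xiOp κ
        (fun w => c * ((upperIncompleteGamma (1 - κ) (4 * π * n * w.im) : ℝ) : ℂ)
          * Complex.exp (-2 * π * Complex.I * n * w)) z
      = -(((4 * π * n) ^ (1 - κ) : ℝ) : ℂ) * (starRingEnd ℂ) c
          * Complex.exp (2 * π * Complex.I * n * z) := by
  intro z hz
  set a := 4 * π * n
  set Γ' := -(Real.exp (-(a * z.im)) * (a * z.im) ^ (-κ) * a)
  have ha : 0 < a := by positivity
  have hΓ : HasDerivAt (fun t => upperIncompleteGamma (1 - κ) (a * t)) Γ' z.im := by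
    simpa [Function.comp_def] using (hasDerivAt_upperIncompleteGamma (1 - κ) (mul_pos ha hz)).comp
      z.im ((hasDerivAt_id z.im).const_mul a)
  have hcoeff : z.im ^ κ * Γ' = -(a ^ (1 - κ) * Real.exp (-(a * z.im))) := by
    linear_combination -Real.exp (-(a * z.im)) * rpow_mul_mul_rpow_neg ha hz κ
  clear_value Γ'
  have hexp : Differentiable ℂ fun w : ℂ => Complex.exp (-2 * π * Complex.I * n * w) := by
    fun_prop
  have hΓz := (hasFDerivAt_ofReal_comp_im hΓ).differentiableAt
  have hwd : wdzbar (fun w => c * ((upperIncompleteGamma (1 - κ) (a * w.im) : ℝ) : ℂ)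
        * Complex.exp (-2 * π * Complex.I * n * w)) z
      = c * (Complex.I * Γ' / 2) * Complex.exp (-2 * π * Complex.I * n * z) := by
    rw [wdzbar_mul (hΓz.const_mul c) ((hexp z).restrictScalars ℝ),
      wdzbar_eq_zero_of_differentiableAt (hexp z), wdzbar_mul (differentiableAt_const c) hΓz,
      wdzbar_ofReal_comp_im hΓ, wdzbar_eq_zero_of_differentiableAt (differentiableAt_const c)]
    ring
  calc xiOp κ _ z
      = ((z.im ^ κ * Γ' : ℝ) : ℂ) * (starRingEnd ℂ) c
          * (starRingEnd ℂ) (Complex.exp (-2 * π * Complex.I * n * z)) := by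
        rw [xiOp, hwd, map_mul, map_mul, map_div₀, map_mul, Complex.conj_I, Complex.conj_ofReal,
          map_ofNat, Complex.ofReal_mul]
        linear_combination (-(z.im ^ κ : ℝ) * Γ' * (starRingEnd ℂ) c
          * (starRingEnd ℂ) (Complex.exp (-2 * π * Complex.I * n * z)) : ℂ) * Complex.I_sq
    _ = -((a ^ (1 - κ) : ℝ) : ℂ) * (starRingEnd ℂ) c
          * ((starRingEnd ℂ) (Complex.exp (-2 * π * Complex.I * n * z))
            * ((Real.exp (-(a * z.im)) : ℝ) : ℂ)) := by
        rw [hcoeff]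
        push_cast
        ring
    _ = _ := by rw [conj_cexp_neg_two_pi_I_mul_mul_exp]
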